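/- Let π: L(p) → L(q) be an admissible homomorphism. Then δ_p(ω) and δ_q(ω') have the same sign (both negative, both zero, or both positive), where ω and ω' are the dualizing elements and δ_p, δ_q are the degree maps. Consequently L(p) is of domestic, tubular, or wild type if and only if L(q) is of the same type. -/

import Mathlib

open scoped BigOperators

def stringRelators {ι : Type} [DecidableEq ι] (p : ι → ℕ) : Set (ι → ℤ) :=
  { v | ∃ i j : ι, v = (p i : ℤ) • Pi.single i 1 - (p j : ℤ) • Pi.single j 1 }

abbrev StringGroup {ι : Type} [DecidableEq ι] (p : ι → ℕ) : Type :=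
  (ι → ℤ) ⧸ AddSubgroup.closure (stringRelators p)

def xgen {ι : Type} [DecidableEq ι] (p : ι → ℕ) (i : ι) : StringGroup p :=
  QuotientAddGroup.mk (Pi.single i 1)

def canon {ι : Type} [DecidableEq ι] (p : ι → ℕ) (i : ι) : StringGroup p :=
  (p i : ℤ) • xgen p i

def IsEffective {κ : Type} [DecidableEq κ] (q : κ → ℕ) (H : AddSubgroup (StringGroup q)) : Prop :=
  ∀ j : κ, ∀ ρ : StringGroup q →+ ZMod (q j),
    (∀ k, ρ (xgen q k) = if k = j then 1 else 0) →
    ∀ y : ZMod (q j), ∃ x ∈ H, ρ x = y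

def Admissible {ι κ : Type} [DecidableEq ι] [DecidableEq κ]
    (p : ι → ℕ) (q : κ → ℕ)
    (multp : StringGroup p → ℕ) (multq : StringGroup q → ℕ)
    (π : StringGroup p →+ StringGroup q) : Prop :=
  IsEffective q π.range ∧
  ∀ z ∈ Set.range π, (∑ᶠ x ∈ π ⁻¹' {z}, multp x) = multq z

/-!
Write `x ∈ L(p)` in normal form `x = ∑ lᵢ xᵢ + l c` with `0 ≤ lᵢ < pᵢ`; then `mult x = (l + 1)⁺`
and `ω - x` has `c`-coefficient `-2 - l`. The fibre condition over `0` forces every nonzero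
element of `ker π` to have multiplicity `0`; its multiples then have bounded degree, so
`ker π ⊆ ker δ_p`, and `ker π` is finite, of order `n`. Comparing the fibre conditions at `x` and at
`x + M·lcm(q)·c` for large `M` removes the truncation `(·)⁺`: the `c`-coefficients satisfy
`l'(πx) + 1 = ∑_{k ∈ ker π} (l(x + k) + 1)` exactly, and `δ_q(πc) = n·lcm(q)`. Applied to `ω - x`
this gives `l'(πω - πx) = l'(ω' - πx)`, so `δ_q(πω) - δ_q(ω')` is a difference of residue digits
at every point of `im π`; averaged over the residue vectors of `im π`, on which each coordinate is
equidistributed by effectiveness, it vanishes. Finally every homomorphism `L(p) → ℤ` is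
proportional to `δ_p`, whence `lcm(p)·δ_q(ω') = n·lcm(q)·δ_p(ω)`.
-/

open Finset

lemma Finset.lcm_div_mul_cancel {ι : Type*} (s : Finset ι) (p : ι → ℕ) {i : ι} (hi : i ∈ s) :
    ((s.lcm p / p i : ℕ) : ℤ) * p i = s.lcm p := by
  exact_mod_cast Nat.div_mul_cancel (dvd_lcm hi)

lemma Finset.natCast_lcm_pos {ι : Type*} (s : Finset ι) (p : ι → ℕ) [∀ i, NeZero (p i)] :
    (0 : ℤ) < s.lcm p :=
  Int.natCast_pos.mpr (Nat.pos_of_ne_zero (lcm_ne_zero_iff.mpr fun i _ => NeZero.ne (p i)))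

lemma eq_zero_of_finsum_mem_eq_apply {α : Type*} {f : α → ℕ} {s : Set α} {a x : α}
    (h : ∑ᶠ y ∈ s, f y = f a) (ha : a ∈ s) (hfa : f a ≠ 0) (hx : x ∈ s) (hxa : x ≠ a) :
    f x = 0 := by
  classical
  by_contra hfx
  have hfin : (s ∩ Function.support f).Finite := by
    by_contra hinf
    exact hfa (h.symm.trans (finsum_mem_eq_zero_of_infinite hinf))
  rw [finsum_mem_eq_sum f hfin] at h
  have hle : f x + f a ≤ ∑ y ∈ hfin.toFinset, f y := by
    rw [← sum_pair hxa]
    refine sum_le_sum_of_subset fun y hy => ?_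
    rw [mem_insert, mem_singleton] at hy
    rcases hy with rfl | rfl <;> simp [*]
  omega

lemma AddMonoidHom.finsum_mem_fiber_eq_sum_ker {G H M : Type*} [AddGroup G] [AddGroup H]
    [AddCommMonoid M] (π : G →+ H) [Fintype π.ker] (f : G → M) (x : G) :
    ∑ᶠ y ∈ π ⁻¹' {π x}, f y = ∑ k : π.ker, f (x + k) := by
  have hfiber : π ⁻¹' {π x} = Set.range fun k : π.ker => x + k := by
    ext y
    refine ⟨fun hy => ⟨⟨-x + y, by simp_all⟩, by simp⟩, ?_⟩
    rintro ⟨k, rfl⟩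
    simp [AddMonoidHom.mem_ker.mp k.2]
  rw [hfiber, finsum_mem_range (g := fun k : π.ker => x + k)
      ((add_right_injective x).comp Subtype.val_injective),
    finsum_eq_sum_of_fintype]

lemma sum_eq_and_eq_of_forall_toNat_eq {α : Type*} [Fintype α] [Nonempty α] (a : α → ℤ)
    {b e Q : ℤ} (hQ : 0 < Q)
    (h : ∀ M : ℕ, ∑ k, (a k + M * Q).toNat = (b + M * e).toNat) :
    ∑ k, a k = b ∧ e = Fintype.card α * Q := by
  set N : ℕ := (∑ k, |a k|).toNat
  have hlin : ∀ M : ℕ, N < M → b + M * e = ∑ k, a k + Fintype.card α * (M * Q) := by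
    intro M hM
    have hpos : ∀ k, 0 < a k + M * Q := fun k => by
      have h1 : |a k| ≤ ∑ k, |a k| := single_le_sum (fun k _ => abs_nonneg (a k)) (mem_univ k)
      have h2 : ∑ k, |a k| < M := by omega
      nlinarith [neg_abs_le (a k)]
    have hsum : 0 < ∑ k, (a k + M * Q) := sum_pos (fun k _ => hpos k) univ_nonempty
    have hM := congrArg (Nat.cast : ℕ → ℤ) (h M)
    rw [Nat.cast_sum, sum_congr rfl fun k _ => Int.toNat_of_nonneg (hpos k).le,
      Int.toNat_of_nonneg (by omega)] at hM
    rw [← hM, sum_add_distrib, sum_const, card_univ, nsmul_eq_mul]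
  have h1 := hlin (N + 1) (by omega)
  have h2 := hlin (N + 2) (by omega)
  push_cast at h1 h2
  have he : e = Fintype.card α * Q := by linear_combination h2 - h1
  exact ⟨by linear_combination -h1 + ((N : ℤ) + 1) * he, he⟩

lemma AddSubgroup.sum_sub_map_eq {G H M : Type*} [AddCommGroup G] [AddCommGroup H]
    [AddCommMonoid M] (R : AddSubgroup G) [Fintype R] (φ : G →+ H)
    (hφ : ∀ b, ∃ u ∈ R, φ u = b) (f : H → M) (a b : H) :
    ∑ u : R, f (a - φ u) = ∑ u : R, f (b - φ u) := by
  obtain ⟨v, hv, hva⟩ := hφ (b - a)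
  refine Fintype.sum_equiv (Equiv.addRight ⟨v, hv⟩) _ _ fun u => ?_
  simp only [Equiv.coe_addRight, AddSubgroup.coe_add, map_add, hva]
  congr 1
  abel

lemma sign_iff_of_mul_eq_mul {R : Type*} [CommRing R] [LinearOrder R] [IsStrictOrderedRing R]
    {a b x y : R} (ha : 0 < a) (hb : 0 < b) (h : a * x = b * y) :
    (x < 0 ↔ y < 0) ∧ (x = 0 ↔ y = 0) ∧ (0 < x ↔ 0 < y) := by
  refine ⟨⟨fun hx => ?_, fun hy => ?_⟩, ⟨fun hx => ?_, fun hy => ?_⟩, ⟨fun hx => ?_, fun hy => ?_⟩⟩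
  all_goals nlinarith

namespace StringGroup

section

variable {ι : Type} [DecidableEq ι] (p : ι → ℕ)

lemma canon_eq (i j : ι) : canon p i = canon p j := by
  have h : (p i : ℤ) • Pi.single i (1 : ℤ) - (p j : ℤ) • Pi.single j 1 ∈
      AddSubgroup.closure (stringRelators p) :=
    AddSubgroup.subset_closure ⟨i, j, rfl⟩
  rw [← QuotientAddGroup.eq_zero_iff, QuotientAddGroup.mk_sub, QuotientAddGroup.mk_zsmul,
    QuotientAddGroup.mk_zsmul, sub_eq_zero] at h
  exact h

lemma hom_ext [Finite ι] {A : Type*} [AddCommGroup A] {f g : StringGroup p →+ A}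
    (h : ∀ i, f (xgen p i) = g (xgen p i)) : f = g := by
  refine QuotientAddGroup.addMonoidHom_ext _ (AddMonoidHom.functions_ext _ _ _ fun i n => ?_)
  rw [← mul_one n, ← smul_eq_mul, Pi.single_smul]
  simp only [AddMonoidHom.comp_apply, QuotientAddGroup.mk'_apply, map_zsmul]
  exact congrArg (n • ·) (h i)

def residue (j : ι) : StringGroup p →+ ZMod (p j) :=
  QuotientAddGroup.lift _ ((Int.castAddHom (ZMod (p j))).comp (Pi.evalAddMonoidHom (fun _ => ℤ) j))
    ((AddSubgroup.closure_le _).mpr <| by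
      rintro v ⟨i, k, rfl⟩
      simp only [SetLike.mem_coe, AddMonoidHom.mem_ker, AddMonoidHom.comp_apply,
        Pi.evalAddMonoidHom_apply, Pi.sub_apply, Pi.smul_apply, smul_eq_mul, Pi.single_apply,
        Int.coe_castAddHom, mul_ite, mul_one, mul_zero]
      split_ifs <;> subst_vars <;> simp)

lemma residue_xgen (j i : ι) : residue p j (xgen p i) = if i = j then 1 else 0 := by
  simp [residue, xgen, Pi.single_apply, eq_comm]

lemma residue_canon (j i : ι) : residue p j (canon p i) = 0 := by
  rw [canon_eq p i j, canon, map_zsmul, residue_xgen, if_pos rfl, zsmul_eq_mul, mul_one]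
  exact_mod_cast ZMod.natCast_self (p j)

/-- `xcoeff p x i` and `ccoeff p x` are the coefficients `lᵢ` and `l` of the normal form
`x = ∑ lᵢ xᵢ + l c` with `0 ≤ lᵢ < pᵢ` (`eq_normalForm`). -/
def xcoeff (x : StringGroup p) (i : ι) : ℤ := (residue p i x).val

lemma xcoeff_nonneg (x : StringGroup p) (i : ι) : 0 ≤ xcoeff p x i := Int.natCast_nonneg _

lemma xcoeff_lt [∀ i, NeZero (p i)] (x : StringGroup p) (i : ι) : xcoeff p x i < p i :=
  Nat.cast_lt.mpr (ZMod.val_lt _)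

variable [Fintype ι]

def degree : StringGroup p →+ ℤ :=
  QuotientAddGroup.lift _
    (AddMonoidHom.mk' (fun v => ∑ i, v i * (univ.lcm p / p i : ℕ)) fun v w => by
      simp only [Pi.add_apply, add_mul, sum_add_distrib])
    ((AddSubgroup.closure_le _).mpr <| by
      rintro v ⟨i, k, rfl⟩
      have hdvd : ∀ i, (p i : ℤ) * (((univ.lcm p : ℕ) : ℤ) / p i) = univ.lcm p := fun i =>
        Int.mul_ediv_cancel' (Int.natCast_dvd_natCast.mpr (dvd_lcm (mem_univ i)))
      simp [Pi.single_apply, sub_mul, sum_sub_distrib, hdvd])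

lemma degree_xgen (i : ι) : degree p (xgen p i) = (univ.lcm p / p i : ℕ) := by
  simp [degree, xgen, Pi.single_apply]

lemma degree_canon (i : ι) : degree p (canon p i) = univ.lcm p := by
  rw [canon, map_zsmul, degree_xgen, smul_eq_mul, mul_comm, lcm_div_mul_cancel _ _ (mem_univ i)]

lemma lcm_mul_eq_mul_degree (φ : StringGroup p →+ ℤ) (i₀ : ι) (x : StringGroup p) :
    ((univ.lcm p : ℕ) : ℤ) * φ x = φ (canon p i₀) * degree p x := by
  have h : ((univ.lcm p : ℕ) : ℤ) • φ = φ (canon p i₀) • degree p := by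
    refine hom_ext p fun i => ?_
    rw [canon_eq p i₀ i]
    simp only [AddMonoidHom.smul_apply, smul_eq_mul, degree_xgen, canon, map_zsmul]
    rw [← lcm_div_mul_cancel _ p (mem_univ i)]
    ring
  exact DFunLike.congr_fun h x

lemma residue_lcm_zsmul (j : ι) (z : StringGroup p) :
    residue p j (((univ.lcm p : ℕ) : ℤ) • z) = 0 := by
  rw [map_zsmul, zsmul_eq_mul, Int.cast_natCast,
    (ZMod.natCast_eq_zero_iff _ _).mpr (dvd_lcm (mem_univ j)), zero_mul]

lemma residue_normalForm (l : ι → ℤ) (m : ℤ) (i₀ j : ι) :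
    residue p j (∑ i, l i • xgen p i + m • canon p i₀) = l j := by
  simp [map_sum, residue_xgen, residue_canon]

lemma degree_normalForm (l : ι → ℤ) (m : ℤ) (i₀ : ι) :
    degree p (∑ i, l i • xgen p i + m • canon p i₀)
      = ∑ i, l i * (univ.lcm p / p i : ℕ) + m * univ.lcm p := by
  simp only [map_add, map_sum, map_zsmul, degree_xgen, degree_canon, smul_eq_mul]

def ccoeff (x : StringGroup p) : ℤ :=
  (degree p x - ∑ i, xcoeff p x i * (univ.lcm p / p i : ℕ)) / (univ.lcm p : ℕ)

lemma ccoeff_zero : ccoeff p 0 = 0 := by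
  simp [ccoeff, xcoeff]

def mult (x : StringGroup p) : ℕ := (ccoeff p x + 1).toNat

def dualizing (i₀ : ι) : StringGroup p :=
  ((Fintype.card ι : ℤ) - 2) • canon p i₀ - ∑ i, xgen p i

lemma dualizing_eq_normalForm (i₀ : ι) :
    dualizing p i₀ = ∑ i, ((p i : ℤ) - 1) • xgen p i + (-2 : ℤ) • canon p i₀ := by
  have h : ∑ i, (p i : ℤ) • xgen p i = (Fintype.card ι : ℤ) • canon p i₀ := by
    rw [show ∑ i, (p i : ℤ) • xgen p i = ∑ _i : ι, canon p i₀ from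
      sum_congr rfl fun i _ => canon_eq p i i₀, sum_const, card_univ, natCast_zsmul]
  simp only [dualizing, sub_smul, sum_sub_distrib, one_smul, h]
  abel

section NormalForm

variable [∀ i, NeZero (p i)]

lemma lcm_mul_ccoeff (x : StringGroup p) :
    ((univ.lcm p : ℕ) : ℤ) * ccoeff p x
      = degree p x - ∑ i, xcoeff p x i * (univ.lcm p / p i : ℕ) := by
  refine Int.mul_ediv_cancel' ?_
  obtain ⟨v, rfl⟩ := QuotientAddGroup.mk_surjective x
  have hx : ∀ i, xcoeff p v i = v i % p i := fun i => ZMod.val_intCast (v i)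
  refine ⟨∑ i, v i / p i, ?_⟩
  simp only [degree, QuotientAddGroup.lift_mk, AddMonoidHom.mk'_apply, hx, ← sum_sub_distrib,
    mul_sum, ← sub_mul]
  refine sum_congr rfl fun i _ => ?_
  rw [← lcm_div_mul_cancel _ p (mem_univ i), Int.emod_def]
  ring

lemma coeff_eq_of_eq_normalForm {x : StringGroup p} {l : ι → ℤ} {m : ℤ} {i₀ : ι}
    (hl : ∀ i, 0 ≤ l i ∧ l i < p i) (hx : x = ∑ i, l i • xgen p i + m • canon p i₀) :
    xcoeff p x = l ∧ ccoeff p x = m := by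
  have hxl : xcoeff p x = l := funext fun j => by
    rw [xcoeff, hx, residue_normalForm, ZMod.val_intCast, Int.emod_eq_of_lt (hl j).1 (hl j).2]
  refine ⟨hxl, mul_left_cancel₀ ((natCast_lcm_pos univ p).ne') ?_⟩
  rw [lcm_mul_ccoeff, hxl, hx, degree_normalForm]
  ring

lemma exists_normalForm (x : StringGroup p) (i₀ : ι) :
    ∃ (l : ι → ℤ) (m : ℤ), (∀ i, 0 ≤ l i ∧ l i < p i) ∧
      x = ∑ i, l i • xgen p i + m • canon p i₀ := by
  obtain ⟨v, rfl⟩ := QuotientAddGroup.mk_surjective x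
  have hp : ∀ i, (0 : ℤ) < p i := fun i => by exact_mod_cast Nat.pos_of_ne_zero (NeZero.ne (p i))
  refine ⟨fun i => v i % p i, ∑ i, v i / p i,
    fun i => ⟨Int.emod_nonneg _ (hp i).ne', Int.emod_lt_of_pos _ (hp i)⟩, ?_⟩
  have hv : (v : StringGroup p) = ∑ i, v i • xgen p i := by
    conv_lhs => rw [← univ_sum_single v]
    rw [QuotientAddGroup.mk_sum]
    refine sum_congr rfl fun i _ => ?_
    rw [xgen, ← QuotientAddGroup.mk_zsmul, ← Pi.single_smul, smul_eq_mul, mul_one]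
  have hm : (∑ i, v i / (p i : ℤ)) • canon p i₀ = ∑ i, (v i / (p i : ℤ)) • canon p i₀ :=
    map_sum (zmultiplesHom _ (canon p i₀)) _ _
  rw [hv, hm, ← sum_add_distrib]
  refine sum_congr rfl fun i _ => ?_
  rw [canon_eq p i₀ i, canon, smul_smul, ← add_zsmul, Int.emod_add_ediv_mul]

lemma eq_normalForm (x : StringGroup p) (i₀ : ι) :
    x = ∑ i, xcoeff p x i • xgen p i + ccoeff p x • canon p i₀ := by
  obtain ⟨l, m, hl, hx⟩ := exists_normalForm p x i₀
  obtain ⟨hxl, hxm⟩ := coeff_eq_of_eq_normalForm p hl hx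
  rwa [hxl, hxm]

lemma eq_mult_of_normalForm {f : StringGroup p → ℕ} (i₀ : ι)
    (hf : ∀ (l : ι → ℤ) (m : ℤ), (∀ i, 0 ≤ l i ∧ l i < p i) →
      f (∑ i, l i • xgen p i + m • canon p i₀) = (m + 1).toNat) :
    f = mult p :=
  funext fun x => by
    rw [mult, ← hf _ _ fun i => ⟨xcoeff_nonneg p x i, xcoeff_lt p x i⟩, ← eq_normalForm]

lemma eq_of_residue_eq_of_degree_eq [Nonempty ι] {x y : StringGroup p}
    (hr : ∀ i, residue p i x = residue p i y) (hd : degree p x = degree p y) : x = y := by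
  have hc : xcoeff p x = xcoeff p y := funext fun i => by simp only [xcoeff, hr]
  have hm : ccoeff p x = ccoeff p y := by simp only [ccoeff, hc, hd]
  obtain ⟨i₀⟩ := ‹Nonempty ι›
  rw [eq_normalForm p x i₀, eq_normalForm p y i₀, hc, hm]

lemma degree_le (x : StringGroup p) :
    degree p x ≤ (Fintype.card ι + ccoeff p x) * univ.lcm p := by
  have h := lcm_mul_ccoeff p x
  have hsum : ∑ i, xcoeff p x i * (univ.lcm p / p i : ℕ) ≤ ∑ _i : ι, ((univ.lcm p : ℕ) : ℤ) :=
    sum_le_sum fun i _ => by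
      rw [← lcm_div_mul_cancel univ p (mem_univ i), mul_comm]
      exact mul_le_mul_of_nonneg_left (xcoeff_lt p x i).le (by positivity)
  rw [sum_const, card_univ, nsmul_eq_mul] at hsum
  linarith

lemma lcm_mul_ccoeff_of_residue_eq_zero {a : StringGroup p} (ha : ∀ i, residue p i a = 0) :
    ((univ.lcm p : ℕ) : ℤ) * ccoeff p a = degree p a := by
  simp [lcm_mul_ccoeff, xcoeff, ha]

lemma ccoeff_add_of_residue_eq_zero {a : StringGroup p} (ha : ∀ i, residue p i a = 0)
    (x : StringGroup p) : ccoeff p (x + a) = ccoeff p x + ccoeff p a := by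
  have hx : xcoeff p (x + a) = xcoeff p x := funext fun i => by simp [xcoeff, ha]
  refine mul_left_cancel₀ ((natCast_lcm_pos univ p).ne') ?_
  rw [mul_add, lcm_mul_ccoeff, lcm_mul_ccoeff, lcm_mul_ccoeff_of_residue_eq_zero p ha, hx, map_add]
  ring

lemma ccoeff_zsmul_of_residue_eq_zero {a : StringGroup p} (ha : ∀ i, residue p i a = 0)
    (M : ℤ) : ccoeff p (M • a) = M * ccoeff p a := by
  refine mul_left_cancel₀ ((natCast_lcm_pos univ p).ne') ?_
  rw [lcm_mul_ccoeff_of_residue_eq_zero p (by simp [ha]), map_zsmul, smul_eq_mul,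
    ← lcm_mul_ccoeff_of_residue_eq_zero p ha]
  ring

lemma ccoeff_add_zsmul_canon (x : StringGroup p) (M : ℤ) (i : ι) :
    ccoeff p (x + M • canon p i) = ccoeff p x + M := by
  have hc : ∀ j, residue p j (canon p i) = 0 := fun j => residue_canon p j i
  have h1 : ccoeff p (canon p i) = 1 := mul_left_cancel₀ ((natCast_lcm_pos univ p).ne') <| by
    rw [lcm_mul_ccoeff_of_residue_eq_zero p hc, degree_canon, mul_one]
  rw [ccoeff_add_of_residue_eq_zero p (by simp [hc]), ccoeff_zsmul_of_residue_eq_zero p hc, h1,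
    mul_one]

lemma ccoeff_dualizing_sub (i₀ : ι) (x : StringGroup p) :
    ccoeff p (dualizing p i₀ - x) = -2 - ccoeff p x := by
  refine (coeff_eq_of_eq_normalForm p (l := fun i => p i - 1 - xcoeff p x i) (i₀ := i₀)
    (fun i => ⟨by linarith [xcoeff_lt p x i], by linarith [xcoeff_nonneg p x i]⟩) ?_).2
  conv_lhs => rw [dualizing_eq_normalForm, eq_normalForm p x i₀]
  simp only [sub_smul, sum_sub_distrib]
  abel

end NormalForm

end

section Admissible

variable {ι κ : Type} [DecidableEq ι] [Fintype ι] [DecidableEq κ] [Fintype κ]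
  {p : ι → ℕ} {q : κ → ℕ} {π : StringGroup p →+ StringGroup q}

lemma ccoeff_neg_of_mem_ker
    (hfib : ∀ z ∈ Set.range π, ∑ᶠ x ∈ π ⁻¹' {z}, mult p x = mult q z)
    {x : StringGroup p} (hx : π x = 0) (hx0 : x ≠ 0) : ccoeff p x < 0 := by
  have h0 : ∑ᶠ y ∈ π ⁻¹' {0}, mult p y = mult p 0 := by
    rw [hfib 0 ⟨0, map_zero π⟩, mult, mult, ccoeff_zero, ccoeff_zero]
  have hmx := eq_zero_of_finsum_mem_eq_apply h0 (by simp) (by simp [mult, ccoeff_zero])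
    (by simpa using hx) hx0
  rw [mult, Int.toNat_eq_zero] at hmx
  omega

variable [∀ i, NeZero (p i)]

lemma ker_le_ker_degree
    (hfib : ∀ z ∈ Set.range π, ∑ᶠ x ∈ π ⁻¹' {z}, mult p x = mult q z) :
    π.ker ≤ (degree p).ker := by
  have hle : ∀ x, π x = 0 → degree p x ≤ 0 := by
    intro x hx
    by_contra! hpos
    set C : ℤ := Fintype.card ι * univ.lcm p
    set N : ℕ := C.toNat + 1
    have hNx : π ((N : ℤ) • x) = 0 := by simp [hx]
    have hNx0 : (N : ℤ) • x ≠ 0 := fun h0 => by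
      have := congrArg (degree p) h0
      rw [map_zsmul, map_zero, smul_eq_mul] at this
      rcases mul_eq_zero.mp this with h | h <;> omega
    have hneg := ccoeff_neg_of_mem_ker hfib hNx hNx0
    have hdeg := degree_le p ((N : ℤ) • x)
    rw [map_zsmul, smul_eq_mul] at hdeg
    have hP := natCast_lcm_pos univ p
    have hN : C + 1 ≤ N := by simp only [N]; push_cast; linarith [Int.self_le_toNat C]
    nlinarith
  intro x hx
  have h1 := hle x hx
  have h2 := hle (-x) (by simpa using hx)
  rw [map_neg] at h2
  exact AddMonoidHom.mem_ker.mpr (by omega)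

lemma finite_ker [Nonempty ι]
    (hfib : ∀ z ∈ Set.range π, ∑ᶠ x ∈ π ⁻¹' {z}, mult p x = mult q z) : Finite π.ker := by
  have hdeg : ∀ {x}, x ∈ π.ker → degree p x = 0 := fun hx =>
    AddMonoidHom.mem_ker.mp (ker_le_ker_degree hfib hx)
  have hinj : Set.InjOn (fun x i => residue p i x) (π.ker : Set (StringGroup p)) :=
    fun x hx y hy hxy => eq_of_residue_eq_of_degree_eq p (congrFun hxy) (by rw [hdeg hx, hdeg hy])
  exact (Set.Finite.of_finite_image (Set.toFinite _) hinj).to_subtype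

variable [∀ j, NeZero (q j)]

lemma sum_toNat_ccoeff_add_ker
    (hfib : ∀ z ∈ Set.range π, ∑ᶠ x ∈ π ⁻¹' {z}, mult p x = mult q z) [Fintype π.ker]
    (i₀ : ι) (x : StringGroup p) (M : ℕ) :
    ∑ k : π.ker, (ccoeff p (x + k) + 1 + M * univ.lcm q).toNat
      = (ccoeff q (π x) + 1 + M * ccoeff q (((univ.lcm q : ℕ) : ℤ) • π (canon p i₀))).toNat := by
  set y := x + (M * univ.lcm q : ℤ) • canon p i₀
  have hy : π y = π x + (M : ℤ) • (((univ.lcm q : ℕ) : ℤ) • π (canon p i₀)) := by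
    rw [map_add, map_zsmul, smul_smul]
  have h := hfib (π y) ⟨y, rfl⟩
  rw [AddMonoidHom.finsum_mem_fiber_eq_sum_ker, hy, mult,
    ccoeff_add_of_residue_eq_zero q (fun j => by rw [map_zsmul, residue_lcm_zsmul, smul_zero]),
    ccoeff_zsmul_of_residue_eq_zero q (residue_lcm_zsmul q · _)] at h
  rw [add_right_comm (ccoeff q (π x))] at h
  rw [← h]
  refine sum_congr rfl fun k _ => ?_
  rw [mult, show y + k = x + k + (M * univ.lcm q : ℤ) • canon p i₀ from
    add_right_comm _ _ _, ccoeff_add_zsmul_canon, add_right_comm]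

lemma sum_ccoeff_add_ker [Nonempty ι]
    (hfib : ∀ z ∈ Set.range π, ∑ᶠ x ∈ π ⁻¹' {z}, mult p x = mult q z) [Fintype π.ker]
    (x : StringGroup p) :
    ∑ k : π.ker, (ccoeff p (x + k) + 1) = ccoeff q (π x) + 1 :=
  (sum_eq_and_eq_of_forall_toNat_eq _ (natCast_lcm_pos univ q)
    (sum_toNat_ccoeff_add_ker hfib (Classical.arbitrary ι) x)).1

lemma degree_map_canon
    (hfib : ∀ z ∈ Set.range π, ∑ᶠ x ∈ π ⁻¹' {z}, mult p x = mult q z) [Fintype π.ker]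
    (i₀ : ι) : degree q (π (canon p i₀)) = Fintype.card π.ker * univ.lcm q := by
  have he := (sum_eq_and_eq_of_forall_toNat_eq _ (natCast_lcm_pos univ q)
    (sum_toNat_ccoeff_add_ker hfib i₀ 0)).2
  have h := lcm_mul_ccoeff_of_residue_eq_zero q (residue_lcm_zsmul q · (π (canon p i₀)))
  rw [he, map_zsmul, smul_eq_mul] at h
  exact (mul_left_cancel₀ (natCast_lcm_pos univ q).ne' h).symm

lemma ccoeff_map_dualizing_sub
    (hfib : ∀ z ∈ Set.range π, ∑ᶠ x ∈ π ⁻¹' {z}, mult p x = mult q z) [Fintype π.ker]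
    (i₀ : ι) (j₀ : κ) (x : StringGroup p) :
    ccoeff q (π (dualizing p i₀) - π x) = ccoeff q (dualizing q j₀ - π x) := by
  have : Nonempty ι := ⟨i₀⟩
  have hneg : ∑ k : π.ker, (ccoeff p (dualizing p i₀ - x + k) + 1)
      = -∑ k : π.ker, (ccoeff p (x + k) + 1) := by
    rw [← sum_neg_distrib]
    refine Fintype.sum_equiv (Equiv.neg _) _ _ fun k => ?_
    rw [Equiv.neg_apply, show dualizing p i₀ - x + k = dualizing p i₀ - (x + ↑(-k)) by simp; abel,
      ccoeff_dualizing_sub]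
    ring
  rw [sum_ccoeff_add_ker hfib, sum_ccoeff_add_ker hfib, map_sub] at hneg
  rw [ccoeff_dualizing_sub]
  linarith

lemma degree_map_dualizing_sub_eq_sum
    (hfib : ∀ z ∈ Set.range π, ∑ᶠ x ∈ π ⁻¹' {z}, mult p x = mult q z) [Fintype π.ker]
    (i₀ : ι) (j₀ : κ) (x : StringGroup p) :
    degree q (π (dualizing p i₀)) - degree q (dualizing q j₀)
      = ∑ j, (xcoeff q (π (dualizing p i₀) - π x) j - xcoeff q (dualizing q j₀ - π x) j)
          * (univ.lcm q / q j : ℕ) := by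
  have e1 := lcm_mul_ccoeff q (π (dualizing p i₀) - π x)
  have e2 := lcm_mul_ccoeff q (dualizing q j₀ - π x)
  rw [ccoeff_map_dualizing_sub hfib i₀ j₀ x, map_sub] at e1
  rw [map_sub] at e2
  simp only [sub_mul, sum_sub_distrib]
  linarith

lemma degree_map_dualizing (hπ : Admissible p q (mult p) (mult q) π) [Fintype π.ker]
    (i₀ : ι) (j₀ : κ) : degree q (π (dualizing p i₀)) = degree q (dualizing q j₀) := by
  classical
  set R := ((AddMonoidHom.pi (residue q)).comp π).range
  set D := degree q (π (dualizing p i₀)) - degree q (dualizing q j₀)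
  set A := AddMonoidHom.pi (residue q) (π (dualizing p i₀))
  set B := AddMonoidHom.pi (residue q) (dualizing q j₀)
  have hpt : ∀ u ∈ R,
      D = ∑ j, (((A j - u j).val : ℤ) - (B j - u j).val) * (univ.lcm q / q j : ℕ) := by
    rintro _ ⟨x, rfl⟩
    simpa [xcoeff, A, B] using degree_map_dualizing_sub_eq_sum hπ.2 i₀ j₀ x
  have hsurj : ∀ j, ∀ b : ZMod (q j), ∃ u ∈ R, Pi.evalAddMonoidHom _ j u = b := fun j b => by
    obtain ⟨_, ⟨x, rfl⟩, hx⟩ := hπ.1 j (residue q j) (fun k => residue_xgen q j k) b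
    exact ⟨_, ⟨x, rfl⟩, hx⟩
  have hsum : ∑ _u : R, D = 0 := by
    rw [sum_congr rfl fun u _ => hpt u.1 u.2, sum_comm]
    refine sum_eq_zero fun j _ => ?_
    have hj := AddSubgroup.sum_sub_map_eq R (Pi.evalAddMonoidHom _ j) (hsurj j)
      (fun a => (a.val : ℤ)) (A j) (B j)
    simp only [Pi.evalAddMonoidHom_apply] at hj
    rw [← sum_mul, sum_sub_distrib, hj, sub_self, zero_mul]
  rw [sum_const, card_univ, nsmul_eq_mul, mul_eq_zero] at hsum
  have hD : D = 0 := hsum.resolve_left (by simp)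
  linarith

theorem lcm_mul_degree_dualizing (hπ : Admissible p q (mult p) (mult q) π) [Fintype π.ker]
    (i₀ : ι) (j₀ : κ) :
    ((univ.lcm p : ℕ) : ℤ) * degree q (dualizing q j₀)
      = (Fintype.card π.ker * univ.lcm q) * degree p (dualizing p i₀) := by
  rw [← degree_map_dualizing hπ i₀ j₀, ← degree_map_canon hπ.2 i₀]
  exact lcm_mul_eq_mul_degree p ((degree q).comp π) i₀ _

end Admissible

end StringGroup

theorem stmt14 {t s : ℕ} (p : Fin (t+1) → ℕ) (q : Fin (s+1) → ℕ)
    (hp : ∀ i, 2 ≤ p i) (hq : ∀ j, 2 ≤ q j)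
    (multp : StringGroup p → ℕ) (multq : StringGroup q → ℕ)
    (hmultp : ∀ (l : Fin (t+1) → ℤ) (m : ℤ), (∀ i, 0 ≤ l i ∧ l i < (p i : ℤ)) →
      multp (∑ i, l i • xgen p i + m • canon p 0) = (m + 1).toNat)
    (hmultq : ∀ (l : Fin (s+1) → ℤ) (m : ℤ), (∀ j, 0 ≤ l j ∧ l j < (q j : ℤ)) →
      multq (∑ j, l j • xgen q j + m • canon q 0) = (m + 1).toNat)
    (π : StringGroup p →+ StringGroup q)
    (hadm : Admissible p q multp multq π)
    (δp : StringGroup p →+ ℤ)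
    (hδp : ∀ i, δp (xgen p i) = ((Finset.univ.lcm p) / p i : ℕ))
    (δq : StringGroup q →+ ℤ)
    (hδq : ∀ j, δq (xgen q j) = ((Finset.univ.lcm q) / q j : ℕ)) :
    (δp ((((t : ℕ) + 1 : ℤ) - 2) • canon p 0 - ∑ i, xgen p i) < 0 ↔
      δq ((((s : ℕ) + 1 : ℤ) - 2) • canon q 0 - ∑ j, xgen q j) < 0) ∧
    (δp ((((t : ℕ) + 1 : ℤ) - 2) • canon p 0 - ∑ i, xgen p i) = 0 ↔
      δq ((((s : ℕ) + 1 : ℤ) - 2) • canon q 0 - ∑ j, xgen q j) = 0) ∧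
    (0 < δp ((((t : ℕ) + 1 : ℤ) - 2) • canon p 0 - ∑ i, xgen p i) ↔
      0 < δq ((((s : ℕ) + 1 : ℤ) - 2) • canon q 0 - ∑ j, xgen q j)) := by
  have : ∀ i, NeZero (p i) := fun i => ⟨by have := hp i; omega⟩
  have : ∀ j, NeZero (q j) := fun j => ⟨by have := hq j; omega⟩
  obtain rfl : δp = StringGroup.degree p :=
    StringGroup.hom_ext p fun i => by rw [hδp, StringGroup.degree_xgen]
  obtain rfl : δq = StringGroup.degree q :=
    StringGroup.hom_ext q fun j => by rw [hδq, StringGroup.degree_xgen]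
  obtain rfl := StringGroup.eq_mult_of_normalForm p 0 hmultp
  obtain rfl := StringGroup.eq_mult_of_normalForm q 0 hmultq
  have : Finite π.ker := StringGroup.finite_ker hadm.2
  have : Fintype π.ker := Fintype.ofFinite π.ker
  have key := StringGroup.lcm_mul_degree_dualizing hadm 0 0
  simp only [StringGroup.dualizing, Fintype.card_fin, Nat.cast_add, Nat.cast_one] at key
  exact sign_iff_of_mul_eq_mul
    (mul_pos (by exact_mod_cast Fintype.card_pos) (natCast_lcm_pos univ q))
    (natCast_lcm_pos univ p) key.symm
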